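/- Let α(t) = (t⁶, t⁷ + t¹⁰ + t¹¹). Let ψ = (ψ₁, ψ₂) be a formal diffeomorphism of (ℂ²,0) stabilizing the branch Γ₀ parametrized by α, i.e. there exists a formal diffeomorphism ρ of (ℂ,0) such that ψ₁(α(t)) = ρ(t)⁶ and ψ₂(α(t)) = ρ(t)⁷ + ρ(t)¹⁰ + ρ(t)¹¹ in ℂ[[t]]. Then the second jet of ψ equals the identity: ψ₁ − x ∈ m³ and ψ₂ − y ∈ m³. -/

import Mathlib

/-!
Write `ρ = c t + E` with `t² ∣ E`. Monomials of degree `≥ 3` in `α` have order `≥ 18`, so the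
coefficients of `t^k`, `k < 18`, of `ψ ∘ α` only see the 2-jet of `ψ`; and the coefficient of
`t^k` in `ρ^d` is `c^d [k = d] + d c^(d-1) e_(k-d+1)`, where `e_i` are the coefficients of `E`,
as long as `k < d + 2 (ord E - 1)`.
Comparing the coefficients of `t⁸, …, t¹¹` raises the order of `E` step by step to `7`. Then the
coefficient of `y` in `ψ₂` equals `c⁷ = c¹⁰ = c¹¹`, so `c = 1` and the linear part of `ψ` is the
identity. With `ρ = t + O(t⁷)`, the coefficients of `t¹², …, t¹⁷` form a linear system in the
quadratic part of `ψ` and `e₇, …, e₁₁` whose only solution has vanishing quadratic part.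
-/


open PowerSeries

/-- Substitution of `(x(t), y(t))` (both with zero constant term) into a
two-variable formal power series. -/
noncomputable def substPS (xt yt : PowerSeries ℂ) (f : MvPowerSeries (Fin 2) ℂ) :
    PowerSeries ℂ :=
  PowerSeries.mk fun k =>
    ∑ ij ∈ Finset.range (k + 1) ×ˢ Finset.range (k + 1),
      MvPowerSeries.coeff (Finsupp.single 0 ij.1 + Finsupp.single 1 ij.2) f *
        PowerSeries.coeff k (xt ^ ij.1 * yt ^ ij.2)

/-- The maximal ideal of `ℂ[[x,y]]`: series with zero constant term. -/
noncomputable def mIdeal : Ideal (MvPowerSeries (Fin 2) ℂ) :=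
  RingHom.ker (MvPowerSeries.constantCoeff : MvPowerSeries (Fin 2) ℂ →+* ℂ)

/-- The linear part of a pair `(ψ₁, ψ₂)` of elements of the maximal ideal of
`ℂ[[x,y]]`: the matrix of degree-1 coefficients. -/
noncomputable def linPartPair (psi1 psi2 : MvPowerSeries (Fin 2) ℂ) :
    Matrix (Fin 2) (Fin 2) ℂ :=
  Matrix.of fun i j =>
    MvPowerSeries.coeff (Finsupp.single j 1) (if i = 0 then psi1 else psi2)

/-- The `x`-component `t⁶` of `α`. -/
noncomputable def alphaX : PowerSeries ℂ := PowerSeries.X ^ 6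

/-- The `y`-component `t⁷ + t¹⁰ + t¹¹` of `α`. -/
noncomputable def alphaY : PowerSeries ℂ :=
  PowerSeries.X ^ 7 + PowerSeries.X ^ 10 + PowerSeries.X ^ 11

section PowerSeries

variable {R : Type*} [CommRing R]

theorem PowerSeries.coeff_eq_of_X_pow_dvd_sub {f g : R⟦X⟧} {N n : ℕ} (h : X ^ N ∣ f - g)
    (hn : n < N) : coeff n f = coeff n g := by
  rw [← sub_eq_zero, ← map_sub]
  exact X_pow_dvd_iff.mp h n hn

theorem PowerSeries.X_pow_succ_dvd_of_coeff_eq_zero {φ : R⟦X⟧} {n : ℕ} (hφ : X ^ n ∣ φ)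
    (hn : coeff n φ = 0) : X ^ (n + 1) ∣ φ := by
  rw [X_pow_dvd_iff] at hφ ⊢
  intro i hi
  rcases Nat.lt_succ_iff_lt_or_eq.mp hi with hi | rfl
  exacts [hφ i hi, hn]

theorem PowerSeries.X_sq_dvd_sub_C_coeff_one_mul_X {ρ : R⟦X⟧} (hρ : constantCoeff ρ = 0) :
    X ^ 2 ∣ ρ - C (coeff 1 ρ) * X := by
  rw [X_pow_dvd_iff]
  intro i hi
  interval_cases i <;> simp [hρ]

theorem PowerSeries.X_pow_dvd_add_pow_sub (c : R) {E : R⟦X⟧} {m : ℕ} (hE : X ^ (m + 1) ∣ E)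
    (d : ℕ) :
    X ^ (d + 2 * m) ∣ (C c * X + E) ^ d -
      (C (c ^ d) * X ^ d + C (d * c ^ (d - 1)) * (X ^ (d - 1) * E)) := by
  obtain ⟨F, rfl⟩ := hE
  rcases d with - | d
  · simp
  have hsq : X ^ (2 * m) ∣ (X ^ m * F) ^ 2 := Dvd.intro (F ^ 2) (by ring)
  convert mul_dvd_mul_left (X ^ (d + 1)) (hsq.trans (sq_dvd_add_pow_sub_sub _ (C c) (d + 1)))
    using 1
  · rw [pow_add]
  · rw [show C c * X + X ^ (m + 1) * F = X * (C c + X ^ m * F) by ring, mul_pow]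
    simp only [map_pow, map_mul, map_natCast, Nat.add_sub_cancel]
    ring

end PowerSeries

noncomputable def coeffXY (p q : ℕ) (f : MvPowerSeries (Fin 2) ℂ) : ℂ :=
  MvPowerSeries.coeff (Finsupp.single 0 p + Finsupp.single 1 q) f

theorem coeffXY_X_zero (p q : ℕ) :
    coeffXY p q (MvPowerSeries.X 0) = if p = 1 ∧ q = 0 then 1 else 0 := by
  simp [coeffXY, MvPowerSeries.coeff_X, Finsupp.ext_iff, Fin.forall_fin_two]

theorem coeffXY_X_one (p q : ℕ) :
    coeffXY p q (MvPowerSeries.X 1) = if p = 0 ∧ q = 1 then 1 else 0 := by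
  simp [coeffXY, MvPowerSeries.coeff_X, Finsupp.ext_iff, Fin.forall_fin_two]

theorem coeffXY_zero_zero_of_mem_mIdeal {f : MvPowerSeries (Fin 2) ℂ} (hf : f ∈ mIdeal) :
    coeffXY 0 0 f = 0 := by
  simpa [coeffXY, mIdeal] using hf

theorem X_mem_mIdeal (s : Fin 2) : MvPowerSeries.X s ∈ mIdeal := by
  simp [mIdeal]

theorem exists_eq_X_zero_mul_add_X_one_mul {f : MvPowerSeries (Fin 2) ℂ}
    (hf : MvPowerSeries.constantCoeff f = 0) :
    ∃ g₀ g₁ : MvPowerSeries (Fin 2) ℂ, f = MvPowerSeries.X 0 * g₀ + MvPowerSeries.X 1 * g₁ ∧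
      (∀ e, MvPowerSeries.coeff e g₀ = MvPowerSeries.coeff (e + Finsupp.single 0 1) f) ∧
      ∀ e, MvPowerSeries.coeff e g₁ =
        if e 0 = 0 then MvPowerSeries.coeff (e + Finsupp.single 1 1) f else 0 := by
  let g₀ : MvPowerSeries (Fin 2) ℂ := fun e => MvPowerSeries.coeff (e + Finsupp.single 0 1) f
  let g₁ : MvPowerSeries (Fin 2) ℂ := fun e =>
    if e 0 = 0 then MvPowerSeries.coeff (e + Finsupp.single 1 1) f else 0
  have hg₀ : ∀ e, MvPowerSeries.coeff e g₀ = MvPowerSeries.coeff (e + Finsupp.single 0 1) f :=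
    fun _ => rfl
  have hg₁ : ∀ e, MvPowerSeries.coeff e g₁ =
      if e 0 = 0 then MvPowerSeries.coeff (e + Finsupp.single 1 1) f else 0 := fun _ => rfl
  refine ⟨g₀, g₁, ?_, hg₀, hg₁⟩
  ext e
  rw [map_add, MvPowerSeries.X_def, MvPowerSeries.X_def, MvPowerSeries.coeff_monomial_mul,
    MvPowerSeries.coeff_monomial_mul, hg₀, hg₁]
  by_cases h0 : Finsupp.single 0 1 ≤ e
  · have h1 : e 0 ≠ 0 := by rw [Finsupp.single_le_iff] at h0; omega
    simp [h0, h1, tsub_add_cancel_of_le h0]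
  · by_cases h1 : Finsupp.single 1 1 ≤ e
    · rw [Finsupp.single_le_iff] at h0
      simp [h0, h1, tsub_add_cancel_of_le h1]
      omega
    · obtain rfl : e = 0 := by
        rw [Finsupp.single_le_iff] at h0 h1
        ext i; fin_cases i <;> simp <;> omega
      simp [h0, h1, hf]

theorem mem_mIdeal_pow_of_coeff_eq_zero {n : ℕ} {f : MvPowerSeries (Fin 2) ℂ}
    (h : ∀ e : Fin 2 →₀ ℕ, e 0 + e 1 < n → MvPowerSeries.coeff e f = 0) : f ∈ mIdeal ^ n := by
  induction n generalizing f with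
  | zero => simp
  | succ n ih =>
    obtain ⟨g₀, g₁, rfl, hg₀, hg₁⟩ :=
      exists_eq_X_zero_mul_add_X_one_mul (by simpa using h 0 (by simp))
    rw [pow_succ']
    refine add_mem (Ideal.mul_mem_mul (X_mem_mIdeal 0) (ih fun e he => ?_))
      (Ideal.mul_mem_mul (X_mem_mIdeal 1) (ih fun e he => ?_))
    · rw [hg₀]
      exact h _ (by simp; omega)
    · rw [hg₁]
      split_ifs
      · exact h _ (by simp; omega)
      · rfl

theorem sub_mem_mIdeal_pow_of_coeffXY_eq {n : ℕ} {f g : MvPowerSeries (Fin 2) ℂ}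
    (h : ∀ p q, p + q < n → coeffXY p q f = coeffXY p q g) : f - g ∈ mIdeal ^ n := by
  refine mem_mIdeal_pow_of_coeff_eq_zero fun e he => ?_
  have he' : Finsupp.single 0 (e 0) + Finsupp.single 1 (e 1) = e := by
    ext i; fin_cases i <;> simp
  rw [map_sub, sub_eq_zero, ← he']
  exact h _ _ he

theorem sub_mem_mIdeal_pow_three {f g : MvPowerSeries (Fin 2) ℂ}
    (h00 : coeffXY 0 0 f = coeffXY 0 0 g) (h10 : coeffXY 1 0 f = coeffXY 1 0 g)
    (h01 : coeffXY 0 1 f = coeffXY 0 1 g) (h20 : coeffXY 2 0 f = coeffXY 2 0 g)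
    (h11 : coeffXY 1 1 f = coeffXY 1 1 g) (h02 : coeffXY 0 2 f = coeffXY 0 2 g) :
    f - g ∈ mIdeal ^ 3 := by
  refine sub_mem_mIdeal_pow_of_coeffXY_eq fun p q hpq => ?_
  obtain ⟨hp, hq⟩ : p < 3 ∧ q < 3 := by omega
  interval_cases p <;> interval_cases q <;> first | assumption | omega

theorem coeff_substPS_of_lt {xt yt : ℂ⟦X⟧} {a k : ℕ} (hx : X ^ a ∣ xt) (hy : X ^ a ∣ yt)
    (hk : 2 ≤ k) (hka : k < 3 * a) (f : MvPowerSeries (Fin 2) ℂ) :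
    coeff k (substPS xt yt f) = coeff k (C (coeffXY 1 0 f) * xt + C (coeffXY 0 1 f) * yt +
      C (coeffXY 2 0 f) * xt ^ 2 + C (coeffXY 1 1 f) * (xt * yt) + C (coeffXY 0 2 f) * yt ^ 2) := by
  have hcubic : ∀ i j, 3 ≤ i + j → coeff k (xt ^ i * yt ^ j) = 0 := by
    intro i j hij
    refine (X_pow_dvd_iff (n := a * (i + j))).mp ?_ k (by nlinarith)
    rw [mul_add, pow_add, pow_mul, pow_mul]
    exact mul_dvd_mul (pow_dvd_pow_of_dvd hx i) (pow_dvd_pow_of_dvd hy j)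
  have hquad : ({(1, 0), (0, 1), (2, 0), (1, 1), (0, 2)} : Finset (ℕ × ℕ)) ⊆
      Finset.range (k + 1) ×ˢ Finset.range (k + 1) := by
    intro ij hij
    simp only [Finset.mem_insert, Finset.mem_singleton] at hij
    rcases hij with rfl | rfl | rfl | rfl | rfl <;> simp <;> omega
  rw [substPS, coeff_mk, ← Finset.sum_subset hquad]
  · simp [coeffXY, coeff_C_mul]
    ring
  · rintro ⟨i, j⟩ - hij
    simp only [Finset.mem_insert, Finset.mem_singleton, Prod.mk.injEq, not_or] at hij
    by_cases h3 : 3 ≤ i + j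
    · rw [hcubic i j h3, mul_zero]
    · obtain ⟨rfl, rfl⟩ : i = 0 ∧ j = 0 := by omega
      simp [coeff_one, show k ≠ 0 by omega]

/-- The quadratic jet of `f` composed with `α`, truncated below `t¹⁸`. -/
noncomputable def jetCompAlpha (f : MvPowerSeries (Fin 2) ℂ) : ℂ⟦X⟧ :=
  C (coeffXY 1 0 f) * X ^ 6 + C (coeffXY 0 1 f) * X ^ 7 + C (coeffXY 0 1 f) * X ^ 10 +
    C (coeffXY 0 1 f) * X ^ 11 + C (coeffXY 2 0 f) * X ^ 12 + C (coeffXY 1 1 f) * X ^ 13 +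
    C (coeffXY 0 2 f) * X ^ 14 + C (coeffXY 1 1 f) * X ^ 16 + C (coeffXY 1 1 f) * X ^ 17 +
    C (2 * coeffXY 0 2 f) * X ^ 17

theorem coeff_substPS_alpha {k : ℕ} (hk : 2 ≤ k) (hk18 : k < 18) (f : MvPowerSeries (Fin 2) ℂ) :
    coeff k (substPS alphaX alphaY f) = coeff k (jetCompAlpha f) := by
  have hx : X ^ 6 ∣ alphaX := dvd_rfl
  have hy : X ^ 6 ∣ alphaY := Dvd.intro (X + X ^ 4 + X ^ 5) (by rw [alphaY]; ring)
  rw [coeff_substPS_of_lt hx hy hk hk18]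
  refine coeff_eq_of_X_pow_dvd_sub
    (Dvd.intro (C (coeffXY 0 2 f) * (2 + X ^ 2 + 2 * X ^ 3 + X ^ 4)) ?_) hk18
  simp only [jetCompAlpha, alphaX, alphaY, map_mul, map_ofNat]
  ring

/-- `ψ ∘ α = α ∘ ρ`. -/
def Stabilizes (psi1 psi2 : MvPowerSeries (Fin 2) ℂ) (rho : ℂ⟦X⟧) : Prop :=
  substPS alphaX alphaY psi1 = rho ^ 6 ∧ substPS alphaX alphaY psi2 = rho ^ 7 + rho ^ 10 + rho ^ 11

namespace Stabilizes

variable {psi1 psi2 : MvPowerSeries (Fin 2) ℂ} {c : ℂ} {E : ℂ⟦X⟧} {m : ℕ}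

theorem coeff_jetCompAlpha_fst (h : Stabilizes psi1 psi2 (C c * X + E))
    (hE : X ^ (m + 1) ∣ E) (k : ℕ) (hk : 2 ≤ k := by norm_num) (hk18 : k < 18 := by norm_num)
    (hkm : k < 6 + 2 * m := by norm_num) :
    coeff k (jetCompAlpha psi1) = coeff k (C (c ^ 6) * X ^ 6 + C (6 * c ^ 5) * (X ^ 5 * E)) := by
  have h6 : X ^ (6 + 2 * m) ∣
      (C c * X + E) ^ 6 - (C (c ^ 6) * X ^ 6 + C (6 * c ^ 5) * (X ^ 5 * E)) := by
    simpa using X_pow_dvd_add_pow_sub c hE 6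
  rw [← coeff_substPS_alpha hk hk18, h.1]
  exact coeff_eq_of_X_pow_dvd_sub h6 hkm

theorem coeff_jetCompAlpha_snd (h : Stabilizes psi1 psi2 (C c * X + E))
    (hE : X ^ (m + 1) ∣ E) (k : ℕ) (hk : 2 ≤ k := by norm_num) (hk18 : k < 18 := by norm_num)
    (hkm : k < 7 + 2 * m := by norm_num) :
    coeff k (jetCompAlpha psi2) = coeff k (C (c ^ 7) * X ^ 7 + C (7 * c ^ 6) * (X ^ 6 * E) +
      C (c ^ 10) * X ^ 10 + C (10 * c ^ 9) * (X ^ 9 * E) +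
      C (c ^ 11) * X ^ 11 + C (11 * c ^ 10) * (X ^ 10 * E)) := by
  have h7 : X ^ (7 + 2 * m) ∣
      (C c * X + E) ^ 7 - (C (c ^ 7) * X ^ 7 + C (7 * c ^ 6) * (X ^ 6 * E)) := by
    simpa using X_pow_dvd_add_pow_sub c hE 7
  have h10 : X ^ (7 + 2 * m) ∣
      (C c * X + E) ^ 10 - (C (c ^ 10) * X ^ 10 + C (10 * c ^ 9) * (X ^ 9 * E)) :=
    (pow_dvd_pow X (by omega : 7 + 2 * m ≤ 10 + 2 * m)).trans
      (by simpa using X_pow_dvd_add_pow_sub c hE 10)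
  have h11 : X ^ (7 + 2 * m) ∣
      (C c * X + E) ^ 11 - (C (c ^ 11) * X ^ 11 + C (11 * c ^ 10) * (X ^ 10 * E)) :=
    (pow_dvd_pow X (by omega : 7 + 2 * m ≤ 11 + 2 * m)).trans
      (by simpa using X_pow_dvd_add_pow_sub c hE 11)
  rw [← coeff_substPS_alpha hk hk18, h.2]
  refine coeff_eq_of_X_pow_dvd_sub ?_ hkm
  convert dvd_add (dvd_add h7 h10) h11 using 1
  abel

theorem X_pow_seven_dvd (h : Stabilizes psi1 psi2 (C c * X + E)) (hc : c ≠ 0)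
    (hE : X ^ 2 ∣ E) : X ^ 7 ∣ E := by
  -- With `b` the coefficient of `y` in `ψ₁`, the coefficients of `t⁸, t⁹` in `ψ₂ ∘ α` and of
  -- `t⁹, t⁷, t¹⁰, t¹¹` in `ψ₁ ∘ α` read `0 = 7c⁶e₂`, `0 = 7c⁶e₃`, `0 = 6c⁵e₄`, `b = 6c⁵e₂`,
  -- `b = 6c⁵e₅`, `b = 6c⁵e₆`.
  have hE3 : X ^ 3 ∣ E := by
    have h8 := h.coeff_jetCompAlpha_snd hE 8
    norm_num [jetCompAlpha, coeff_C_mul, coeff_X_pow_mul', X_pow_dvd_iff.mp hE, hc, -map_mul,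
      -map_pow] at h8
    exact X_pow_succ_dvd_of_coeff_eq_zero hE h8
  have hE4 : X ^ 4 ∣ E := by
    have h9 := h.coeff_jetCompAlpha_snd hE3 9
    norm_num [jetCompAlpha, coeff_C_mul, coeff_X_pow_mul', X_pow_dvd_iff.mp hE3, hc, -map_mul,
      -map_pow] at h9
    exact X_pow_succ_dvd_of_coeff_eq_zero hE3 h9
  have hE5 : X ^ 5 ∣ E := by
    have h9 := h.coeff_jetCompAlpha_fst hE4 9
    norm_num [jetCompAlpha, coeff_C_mul, coeff_X_pow_mul', X_pow_dvd_iff.mp hE4, hc, -map_mul,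
      -map_pow] at h9
    exact X_pow_succ_dvd_of_coeff_eq_zero hE4 h9
  have hb : coeffXY 0 1 psi1 = 0 := by
    have h7 := h.coeff_jetCompAlpha_fst hE5 7
    norm_num [jetCompAlpha, coeff_C_mul, coeff_X_pow_mul', X_pow_dvd_iff.mp hE5, -map_mul,
      -map_pow] at h7
    exact h7
  have hE6 : X ^ 6 ∣ E := by
    have h10 := h.coeff_jetCompAlpha_fst hE5 10
    norm_num [jetCompAlpha, coeff_C_mul, coeff_X_pow_mul', X_pow_dvd_iff.mp hE5, hb, hc,
      -map_mul, -map_pow] at h10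
    exact X_pow_succ_dvd_of_coeff_eq_zero hE5 h10
  have h11 := h.coeff_jetCompAlpha_fst hE6 11
  norm_num [jetCompAlpha, coeff_C_mul, coeff_X_pow_mul', X_pow_dvd_iff.mp hE6, hb, hc,
    -map_mul, -map_pow] at h11
  exact X_pow_succ_dvd_of_coeff_eq_zero hE6 h11

theorem linear_part_eq (h : Stabilizes psi1 psi2 (C c * X + E)) (hc : c ≠ 0) (hE : X ^ 7 ∣ E) :
    c = 1 ∧ coeffXY 1 0 psi1 = 1 ∧ coeffXY 0 1 psi1 = 0 ∧
      coeffXY 1 0 psi2 = 0 ∧ coeffXY 0 1 psi2 = 1 := by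
  have f6 := h.coeff_jetCompAlpha_fst hE 6
  have f7 := h.coeff_jetCompAlpha_fst hE 7
  have s6 := h.coeff_jetCompAlpha_snd hE 6
  have s7 := h.coeff_jetCompAlpha_snd hE 7
  have s10 := h.coeff_jetCompAlpha_snd hE 10
  have s11 := h.coeff_jetCompAlpha_snd hE 11
  norm_num [jetCompAlpha, coeff_C_mul, coeff_X_pow_mul', X_pow_dvd_iff.mp hE, -map_mul,
    -map_pow] at f6 f7 s6 s7 s10 s11
  -- the coefficient of `y` in `ψ₂` is read off both at `t¹⁰` and at `t¹¹`
  have hc1 : c = 1 := by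
    refine (mul_left_cancel₀ (pow_ne_zero 10 hc) ?_).symm
    linear_combination s11 - s10
  subst hc1
  norm_num at f6 s7
  exact ⟨rfl, f6, f7, s6, s7⟩

theorem quadratic_part_eq_zero (h : Stabilizes psi1 psi2 (C 1 * X + E)) (hE : X ^ 7 ∣ E) :
    coeffXY 2 0 psi1 = 0 ∧ coeffXY 1 1 psi1 = 0 ∧ coeffXY 0 2 psi1 = 0 ∧
      coeffXY 2 0 psi2 = 0 ∧ coeffXY 1 1 psi2 = 0 ∧ coeffXY 0 2 psi2 = 0 := by
  have f12 := h.coeff_jetCompAlpha_fst hE 12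
  have f13 := h.coeff_jetCompAlpha_fst hE 13
  have f14 := h.coeff_jetCompAlpha_fst hE 14
  have f15 := h.coeff_jetCompAlpha_fst hE 15
  have f16 := h.coeff_jetCompAlpha_fst hE 16
  have s12 := h.coeff_jetCompAlpha_snd hE 12
  have s13 := h.coeff_jetCompAlpha_snd hE 13
  have s14 := h.coeff_jetCompAlpha_snd hE 14
  have s15 := h.coeff_jetCompAlpha_snd hE 15
  have s16 := h.coeff_jetCompAlpha_snd hE 16
  have s17 := h.coeff_jetCompAlpha_snd hE 17
  norm_num [jetCompAlpha, coeff_C_mul, coeff_X_pow_mul', X_pow_dvd_iff.mp hE, -map_mul,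
    -map_pow] at f12 f13 f14 f15 f16 s12 s13 s14 s15 s16 s17
  -- With `B, B'` the coefficients of `xy` in `ψ₁, ψ₂` and `C'` that of `y²` in `ψ₂`:
  -- `B' = 7e₇ = 10e₇ + 7e₁₀` and `e₁₀ = 0` give `e₇ = 0`; then `6e₈ = B = 6e₁₁` and
  -- `B' + 2C' = 7e₁₁ + 10e₈ + 11e₇` with `C' = 7e₈` give `e₈ = 0`.
  have he7 : coeff 7 E = 0 := by linear_combination (s13 - s16) / 3 - 7 / 3 * f15
  have he8 : coeff 8 E = 0 := by
    linear_combination -(s17 - s13 - 2 * s14 + 7 / 6 * (f13 - f16) + 4 * he7) / 3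
  rw [he7] at f12 s13
  rw [he8] at f13 s14
  rw [s15] at f14
  norm_num at f12 f13 f14 s13 s14
  exact ⟨f12, f13, f14, s12, s13, s14⟩

end Stabilizes

theorem stabilizer_of_gamma0_has_identity_second_jet_general
    (psi1 psi2 : MvPowerSeries (Fin 2) ℂ)
    (hpsi1 : psi1 ∈ mIdeal) (hpsi2 : psi2 ∈ mIdeal)
    (rho : PowerSeries ℂ)
    (hrho0 : PowerSeries.constantCoeff rho = 0)
    (hrho1 : PowerSeries.coeff 1 rho ≠ 0)
    (h1 : substPS alphaX alphaY psi1 = rho ^ 6)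
    (h2 : substPS alphaX alphaY psi2 = rho ^ 7 + rho ^ 10 + rho ^ 11) :
    psi1 - MvPowerSeries.X 0 ∈ mIdeal ^ 3 ∧ psi2 - MvPowerSeries.X 1 ∈ mIdeal ^ 3 := by
  obtain ⟨c, E, hc, hE, rfl⟩ : ∃ c E, c ≠ 0 ∧ X ^ 2 ∣ E ∧ rho = C c * X + E :=
    ⟨_, _, hrho1, X_sq_dvd_sub_C_coeff_one_mul_X hrho0, by ring⟩
  have h : Stabilizes psi1 psi2 (C c * X + E) := ⟨h1, h2⟩
  have hE7 := h.X_pow_seven_dvd hc hE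
  obtain ⟨rfl, ha, hb, ha', hb'⟩ := h.linear_part_eq hc hE7
  obtain ⟨hA, hB, hC, hA', hB', hC'⟩ := h.quadratic_part_eq_zero hE7
  have h0 := coeffXY_zero_zero_of_mem_mIdeal hpsi1
  have h0' := coeffXY_zero_zero_of_mem_mIdeal hpsi2
  refine ⟨sub_mem_mIdeal_pow_three ?_ ?_ ?_ ?_ ?_ ?_,
    sub_mem_mIdeal_pow_three ?_ ?_ ?_ ?_ ?_ ?_⟩ <;> simp [coeffXY_X_zero, coeffXY_X_one, *]

theorem stabilizer_of_gamma0_has_identity_second_jet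
    (psi1 psi2 : MvPowerSeries (Fin 2) ℂ)
    (hpsi1 : psi1 ∈ mIdeal) (hpsi2 : psi2 ∈ mIdeal)
    (hlin : IsUnit (linPartPair psi1 psi2).det)
    (rho : PowerSeries ℂ)
    (hrho0 : PowerSeries.constantCoeff rho = 0)
    (hrho1 : PowerSeries.coeff 1 rho ≠ 0)
    (h1 : substPS alphaX alphaY psi1 = rho ^ 6)
    (h2 : substPS alphaX alphaY psi2 = rho ^ 7 + rho ^ 10 + rho ^ 11) :
    psi1 - MvPowerSeries.X 0 ∈ mIdeal ^ 3 ∧ psi2 - MvPowerSeries.X 1 ∈ mIdeal ^ 3 :=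
  stabilizer_of_gamma0_has_identity_second_jet_general psi1 psi2 hpsi1 hpsi2 rho hrho0 hrho1 h1 h2
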